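/- Let E be an effect algebra whose induced order satisfies the Ascending Chain Condition, and define the set-valued natural implication a→b := {b+m : m ∈ Max L(a',b')}, extended to subsets by a→A := ⋃_{x∈A}(a→x). Then for all a,b ∈ E: b'→(Max L(a',b')) = a→b. Moreover a→0 = {a'} and 1→a = {a}. -/
import Mathlib


/-- An effect algebra `(E,+,',0,1)`.  The partial addition is encoded by a total
function `add` together with a definedness predicate `D`; the axioms only
constrain `add` on defined pairs. -/
structure EffectAlgebra (E : Type*) where
  /-- definedness predicate for the partial addition -/
  D : E → E → Prop
  /-- the (partial) addition -/
  add : E → E → E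
  /-- the complementation `x ↦ x'` -/
  compl : E → E
  zero : E
  one : E
  /-- (E1) -/
  comm_def : ∀ {a b : E}, D a b → D b a
  comm : ∀ {a b : E}, D a b → add a b = add b a
  /-- (E2): `(a+b)+c` is defined iff `a+(b+c)` is defined -/
  assoc_def : ∀ a b c : E, (D a b ∧ D (add a b) c) ↔ (D b c ∧ D a (add b c))
  assoc : ∀ a b c : E, D a b → D (add a b) c → add (add a b) c = add a (add b c)
  /-- (E3): `a + b` is defined and equals `1` iff `b = a'` -/
  orth : ∀ a b : E, (D a b ∧ add a b = one) ↔ b = compl a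
  /-- (E4) -/
  one_add : ∀ a : E, D one a → a = zero

/-- The induced order of an effect algebra: `a ≤ b` iff `a + c = b` for some `c`. -/
def EffectAlgebra.le {E : Type*} (A : EffectAlgebra E) (a b : E) : Prop :=
  ∃ c, A.D a c ∧ A.add a c = b

/-- The lower cone `L(a,b) = {x : x ≤ a and x ≤ b}` (w.r.t. the induced order). -/
def EffectAlgebra.lowerCone {E : Type*} (A : EffectAlgebra E) (a b : E) : Set E :=
  {x | A.le x a ∧ A.le x b}

/-- `Max S`: the set of maximal elements of `S` w.r.t. the induced order. -/
def EffectAlgebra.maxOf {E : Type*} (A : EffectAlgebra E) (S : Set E) : Set E :=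
  {x | x ∈ S ∧ ∀ y ∈ S, A.le x y → x = y}

/-- The induced order satisfies the Ascending Chain Condition: there is no
infinite strictly ascending chain. -/
def EffectAlgebra.ACC {E : Type*} (A : EffectAlgebra E) : Prop :=
  ¬ ∃ f : ℕ → E, ∀ n : ℕ, A.le (f n) (f (n + 1)) ∧ f n ≠ f (n + 1)

/-- The set-valued natural implication `a → b := {b + m : m ∈ Max L(a',b')}`
(each such sum is defined since `m ≤ b'`). -/
def EffectAlgebra.impSet {E : Type*} (A : EffectAlgebra E) (a b : E) : Set E :=
  (fun m => A.add b m) '' A.maxOf (A.lowerCone (A.compl a) (A.compl b))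

/-- Extension of the set-valued implication to subsets: `a → S := ⋃_{x ∈ S} (a → x)`. -/
def EffectAlgebra.impSetOfSet {E : Type*} (A : EffectAlgebra E) (a : E) (S : Set E) : Set E :=
  ⋃ x ∈ S, A.impSet a x


namespace EffectAlgebra

variable {E : Type*} (A : EffectAlgebra E)

lemma orth' (x : E) : A.D x (A.compl x) ∧ A.add x (A.compl x) = A.one :=
  (A.orth x (A.compl x)).2 rfl

lemma compl_compl' (x : E) : A.compl (A.compl x) = x := by
  have h := A.orth' x
  exact ((A.orth (A.compl x) x).1 ⟨A.comm_def h.1, (A.comm h.1).symm.trans h.2⟩).symm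

lemma compl_one' : A.compl A.one = A.zero := A.one_add _ (A.orth' A.one).1

lemma compl_zero' : A.compl A.zero = A.one := by
  rw [← A.compl_one', A.compl_compl']

lemma D_one_zero : A.D A.one A.zero ∧ A.add A.one A.zero = A.one :=
  (A.orth A.one A.zero).2 A.compl_one'.symm

lemma add_zero' (x : E) : A.D x A.zero ∧ A.add x A.zero = x := by
  have hyx : A.compl (A.compl x) = x := A.compl_compl' x
  set y := A.compl x with hy
  have h := A.orth' y
  have h10 := A.D_one_zero
  have hD1 : A.D (A.add y (A.compl y)) A.zero := by rw [h.2]; exact h10.1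
  have hassoc := (A.assoc_def y (A.compl y) A.zero).1 ⟨h.1, hD1⟩
  have heq := A.assoc y (A.compl y) A.zero h.1 hD1
  rw [h.2, h10.2] at heq
  have hfin := (A.orth y (A.add (A.compl y) A.zero)).1 ⟨hassoc.2, heq.symm⟩
  rw [hyx] at hassoc hfin
  exact ⟨hassoc.1, hfin⟩

lemma le_refl' (x : E) : A.le x x := ⟨A.zero, (A.add_zero' x).1, (A.add_zero' x).2⟩

lemma le_one' (x : E) : A.le x A.one := ⟨A.compl x, (A.orth' x).1, (A.orth' x).2⟩

lemma zero_le' (x : E) : A.le A.zero x :=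
  ⟨x, A.comm_def (A.add_zero' x).1,
    (A.comm (A.comm_def (A.add_zero' x).1)).trans (A.add_zero' x).2⟩

lemma eq_zero_of_add_eq_zero {x y : E} (hD : A.D x y) (h : A.add x y = A.zero) :
    x = A.zero ∧ y = A.zero := by
  have h01 := (A.orth A.zero A.one).2 A.compl_zero'.symm
  have hD1 : A.D (A.add x y) A.one := by rw [h]; exact h01.1
  have h2 := (A.assoc_def x y A.one).1 ⟨hD, hD1⟩
  have hy0 : y = A.zero := A.one_add y (A.comm_def h2.1)
  subst hy0
  rw [(A.add_zero' x).2] at h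
  exact ⟨h, rfl⟩

lemma eq_zero_of_add_eq_self {a e : E} (hD : A.D a e) (h : A.add a e = a) : e = A.zero := by
  have ha := A.orth' a
  have hD1 : A.D (A.add a e) (A.compl a) := by rw [h]; exact ha.1
  have h2 := (A.assoc_def a e (A.compl a)).1 ⟨hD, hD1⟩
  have heq := A.assoc a e (A.compl a) hD hD1
  rw [h] at heq
  have hea := (A.orth a (A.add e (A.compl a))).1 ⟨h2.2, heq.symm.trans ha.2⟩
  have hD3 : A.D (A.add e (A.compl a)) a := by rw [hea]; exact A.comm_def ha.1
  have h4 := (A.assoc_def e (A.compl a) a).1 ⟨h2.1, hD3⟩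
  have h5 : A.add (A.compl a) a = A.one := (A.comm (A.comm_def ha.1)).trans ha.2
  have hD6 : A.D e A.one := by rw [← h5]; exact h4.2
  exact A.one_add e (A.comm_def hD6)

lemma le_antisymm' {a b : E} (h1 : A.le a b) (h2 : A.le b a) : a = b := by
  obtain ⟨c, hc, ec⟩ := h1
  obtain ⟨d, hd, ed⟩ := h2
  have hD2 : A.D (A.add a c) d := by rw [ec]; exact hd
  have h3 := (A.assoc_def a c d).1 ⟨hc, hD2⟩
  have heq := A.assoc a c d hc hD2
  rw [ec, ed] at heq
  have hcd0 : A.add c d = A.zero := A.eq_zero_of_add_eq_self h3.2 heq.symm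
  have hc0 := (A.eq_zero_of_add_eq_zero h3.1 hcd0).1
  rw [← ec, hc0, (A.add_zero' a).2]

lemma le_compl_symm {a b : E} (h : A.le a (A.compl b)) : A.D b a ∧ A.le b (A.compl a) := by
  obtain ⟨c, hD, hc⟩ := h
  have hb := A.orth' b
  have hD2 : A.D (A.add a c) b := by rw [hc]; exact A.comm_def hb.1
  have h3 := (A.assoc_def a c b).1 ⟨hD, hD2⟩
  have heq := A.assoc a c b hD hD2
  rw [hc] at heq
  have h1 : A.add (A.compl b) b = A.one := (A.comm (A.comm_def hb.1)).trans hb.2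
  have hcb := (A.orth a (A.add c b)).1 ⟨h3.2, heq.symm.trans h1⟩
  have hD3 : A.D (A.add c b) a := by rw [hcb]; exact A.comm_def (A.orth' a).1
  have h4 := (A.assoc_def c b a).1 ⟨h3.1, hD3⟩
  refine ⟨h4.1, c, A.comm_def h3.1, ?_⟩
  rw [A.comm (A.comm_def h3.1)]
  exact hcb

lemma maxOf_eq_singleton {S : Set E} {t : E} (ht : t ∈ S) (hgr : ∀ s ∈ S, A.le s t) :
    A.maxOf S = {t} := by
  ext x
  constructor
  · rintro ⟨hxS, hmax⟩
    exact hmax t ht (hgr x hxS)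
  · rintro rfl
    exact ⟨ht, fun y hy hty => A.le_antisymm' hty (hgr y hy)⟩

lemma impSet_of_le_compl {b x : E} (h : A.le x (A.compl b)) :
    A.impSet (A.compl b) x = {A.add b x} := by
  have hsym := A.le_compl_symm h
  unfold EffectAlgebra.impSet
  have hmax := A.maxOf_eq_singleton (S := A.lowerCone b (A.compl x)) (t := b)
    ⟨A.le_refl' b, hsym.2⟩ (fun s hs => hs.1)
  rw [A.compl_compl', hmax, Set.image_singleton, A.comm hsym.1]

end EffectAlgebra

/-- Theorem 5.2 (v)--(vii): in an effect algebra satisfying the ACC,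
`b' → Max L(a',b') = a → b`, `a → 0 = {a'}` and `1 → a = {a}`. -/
theorem impSet_identities {E : Type*} (A : EffectAlgebra E) (hacc : A.ACC) (a b : E) :
    A.impSetOfSet (A.compl b) (A.maxOf (A.lowerCone (A.compl a) (A.compl b))) =
      A.impSet a b ∧
    A.impSet a A.zero = {A.compl a} ∧
    A.impSet A.one a = {a} := by
  refine ⟨?_, ?_, ?_⟩
  · have key : ∀ x ∈ A.maxOf (A.lowerCone (A.compl a) (A.compl b)),
        A.impSet (A.compl b) x = {A.add b x} := fun x hx => A.impSet_of_le_compl hx.1.2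
    unfold EffectAlgebra.impSetOfSet
    ext z
    simp only [Set.mem_iUnion]
    constructor
    · rintro ⟨x, hx, hz⟩
      rw [key x hx, Set.mem_singleton_iff] at hz
      exact ⟨x, hx, hz.symm⟩
    · rintro ⟨x, hx, rfl⟩
      exact ⟨x, hx, by rw [key x hx]; rfl⟩
  · unfold EffectAlgebra.impSet
    have hmax := A.maxOf_eq_singleton (S := A.lowerCone (A.compl a) A.one) (t := A.compl a)
      ⟨A.le_refl' _, A.le_one' _⟩ (fun s hs => hs.1)
    rw [A.compl_zero', hmax, Set.image_singleton,
      show A.add A.zero (A.compl a) = A.compl a from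
        (A.comm (A.comm_def (A.add_zero' _).1)).trans (A.add_zero' _).2]
  · unfold EffectAlgebra.impSet
    have hmax := A.maxOf_eq_singleton (S := A.lowerCone A.zero (A.compl a)) (t := A.zero)
      ⟨A.le_refl' _, A.zero_le' _⟩ (fun s hs => hs.1)
    rw [A.compl_one', hmax, Set.image_singleton, (A.add_zero' a).2]
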